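/- For all positive integers m and all real a ≥ 0, the sum over k from 1 to m of ψ₀(k+a)/(k+a) equals (1/2)·(ψ₁(m+a+1) − ψ₁(a+1) + ψ₀(m+a+1)² − ψ₀(a+1)²). -/

import Mathlib

open Finset

/-- The digamma function ψ₀ = (log ∘ Γ)'. -/
noncomputable def digamma (x : ℝ) : ℝ := deriv (fun y : ℝ => Real.log (Real.Gamma y)) x

/-- The trigamma function ψ₁ = ψ₀'. -/
noncomputable def trigamma (x : ℝ) : ℝ := deriv digamma x

lemma analyticAt_Gamma {x : ℝ} (hx : 0 < x) : AnalyticAt ℝ Real.Gamma x := by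
  have h1 : AnalyticAt ℂ Complex.Gamma (x : ℂ) := by
    apply DifferentiableOn.analyticAt (s := {z : ℂ | 0 < z.re})
    · intro z hz
      refine (Complex.differentiableAt_Gamma z fun m => ?_).differentiableWithinAt
      intro h
      rw [h] at hz
      simp only [Set.mem_setOf_eq, Complex.neg_re, Complex.natCast_re] at hz
      have : (0:ℝ) ≤ m := Nat.cast_nonneg m
      linarith
    · exact (isOpen_lt continuous_const Complex.continuous_re).mem_nhds (by simpa)
  have h2 : AnalyticAt ℝ (fun y : ℝ => (Complex.Gamma (y:ℂ)).re) x :=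
    (Complex.reCLM.analyticAt _).comp ((h1.restrictScalars).comp (Complex.ofRealCLM.analyticAt x))
  have heq : (fun y : ℝ => (Complex.Gamma (y:ℂ)).re) = Real.Gamma := by
    funext y; rw [Complex.Gamma_ofReal, Complex.ofReal_re]
  rwa [heq] at h2

lemma hasDerivAt_logGamma {y : ℝ} (hy : 0 < y) :
    HasDerivAt (fun t : ℝ => Real.log (Real.Gamma t)) (deriv Real.Gamma y / Real.Gamma y) y := by
  have hΓ : HasDerivAt Real.Gamma (deriv Real.Gamma y) y :=
    (analyticAt_Gamma hy).differentiableAt.hasDerivAt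
  exact hΓ.log (Real.Gamma_pos_of_pos hy).ne'

lemma digamma_eq {y : ℝ} (hy : 0 < y) :
    digamma y = deriv Real.Gamma y / Real.Gamma y :=
  (hasDerivAt_logGamma hy).deriv

lemma analyticAt_digamma {x : ℝ} (hx : 0 < x) : AnalyticAt ℝ digamma x := by
  have hA : AnalyticAt ℝ (fun y => deriv Real.Gamma y / Real.Gamma y) x := by
    have hOn : AnalyticOnNhd ℝ Real.Gamma (Set.Ioi 0) := fun y hy => analyticAt_Gamma hy
    have h1 : AnalyticAt ℝ (deriv Real.Gamma) x := hOn.deriv x hx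
    exact h1.div (analyticAt_Gamma hx) (Real.Gamma_pos_of_pos hx).ne'
  apply hA.congr
  filter_upwards [eventually_gt_nhds hx] with y hy
  exact (digamma_eq hy).symm

lemma differentiableAt_digamma {x : ℝ} (hx : 0 < x) : DifferentiableAt ℝ digamma x :=
  (analyticAt_digamma hx).differentiableAt

lemma digamma_add_one {x : ℝ} (hx : 0 < x) : digamma (x + 1) = digamma x + 1 / x := by
  have h1 : digamma (x + 1) = deriv (fun y : ℝ => Real.log (Real.Gamma (y + 1))) x := by
    rw [digamma, ← deriv_comp_add_const (fun y : ℝ => Real.log (Real.Gamma y)) 1 x]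
  rw [h1]
  have hev : (fun y : ℝ => Real.log (Real.Gamma (y + 1)))
      =ᶠ[nhds x] fun y => Real.log y + Real.log (Real.Gamma y) := by
    filter_upwards [eventually_gt_nhds hx] with y hy
    rw [Real.Gamma_add_one hy.ne', Real.log_mul hy.ne' (Real.Gamma_pos_of_pos hy).ne']
  rw [hev.deriv_eq, deriv_fun_add (Real.differentiableAt_log hx.ne')
      (hasDerivAt_logGamma hx).differentiableAt]
  rw [(hasDerivAt_logGamma hx).deriv, Real.deriv_log, ← digamma_eq hx]
  ring

lemma trigamma_add_one {x : ℝ} (hx : 0 < x) : trigamma (x + 1) = trigamma x - 1 / x ^ 2 := by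
  have h1 : trigamma (x + 1) = deriv (fun y : ℝ => digamma (y + 1)) x := by
    rw [trigamma, ← deriv_comp_add_const digamma 1 x]
  rw [h1]
  have hev : (fun y : ℝ => digamma (y + 1)) =ᶠ[nhds x] fun y => digamma y + y⁻¹ := by
    filter_upwards [eventually_gt_nhds hx] with y hy
    rw [digamma_add_one hy, one_div]
  rw [hev.deriv_eq, deriv_fun_add (differentiableAt_digamma hx) (differentiableAt_inv hx.ne'),
    deriv_inv, trigamma]
  ring

theorem sum_digamma_div_shift (m : ℕ) (hm : 0 < m) (a : ℝ) (ha : 0 ≤ a) :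
    ∑ k ∈ Finset.Icc 1 m, digamma ((k : ℝ) + a) / ((k : ℝ) + a) =
      (1 / 2) * (trigamma ((m : ℝ) + a + 1) - trigamma (a + 1)
        + digamma ((m : ℝ) + a + 1) ^ 2 - digamma (a + 1) ^ 2) := by
  set F : ℝ → ℝ := fun x => trigamma x + digamma x ^ 2 with hF
  have key : ∀ x : ℝ, 0 < x → F (x + 1) - F x = 2 * (digamma x / x) := by
    intro x hx
    simp only [hF, trigamma_add_one hx, digamma_add_one hx]
    field_simp
    ring
  set g : ℕ → ℝ := fun i => F ((i : ℝ) + a + 1) with hg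
  have hterm : ∀ i ∈ Finset.range m,
      digamma (((1 + i : ℕ) : ℝ) + a) / (((1 + i : ℕ) : ℝ) + a)
        = (1 / 2) * (g (i + 1) - g i) := by
    intro i _
    have hpos : (0:ℝ) < (i : ℝ) + 1 + a := by positivity
    have hk := key ((i : ℝ) + 1 + a) hpos
    simp only [hg]
    push_cast
    rw [show (i:ℝ) + 1 + a + 1 = ((i:ℝ) + 1 + a) + 1 by ring,
      show (i:ℝ) + a + 1 = (i:ℝ) + 1 + a by ring, hk,
      show (1:ℝ) + i = (i:ℝ) + 1 by ring]
    ring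
  rw [← Finset.Ico_add_one_right_eq_Icc, Finset.sum_Ico_eq_sum_range]

  simp only [Nat.add_sub_cancel]
  rw [Finset.sum_congr rfl hterm, ← Finset.mul_sum, Finset.sum_range_sub g]
  simp only [hg, hF, Nat.cast_zero]
  ring
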